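/- arXiv:2502.16714 — 2 statements merged into one kernel-verified Lean document; each statement's English description precedes it below -/
import Mathlib

section
/- Let G be a graph with edge b and vertices s, t. Construct G' by subdividing every edge of G except b, where subdividing an edge e of weight w(e) creates two edges each of weight w(e)/2. Then an s-t-path in G' between original vertices of G has odd length if and only if it contains the edge b; consequently, the minimum weight of an s-t-path in G containing b equals the minimum weight of an odd-length s-t-path in G'. -/
/-- The graph obtained from `G` by subdividing every edge not in `F`:
edges in `F` survive between original vertices (`Sum.inl`), while every
edge `e ∉ F` is replaced by a path of length 2 through the new vertex
`Sum.inr e`. -/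
def subdivideOutside {V : Type} (G : SimpleGraph V) (F : Set (Sym2 V)) :
    SimpleGraph (V ⊕ Sym2 V) where
  Adj x y :=
    match x, y with
    | .inl u, .inl v => G.Adj u v ∧ s(u, v) ∈ F
    | .inl u, .inr e => e ∈ G.edgeSet ∧ e ∉ F ∧ u ∈ e
    | .inr e, .inl u => e ∈ G.edgeSet ∧ e ∉ F ∧ u ∈ e
    | .inr _, .inr _ => False
  symm := by
    constructor
    rintro (u | e) (v | f) h
    · obtain ⟨h1, h2⟩ := h
      exact ⟨h1.symm, by rwa [Sym2.eq_swap]⟩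
    · exact h
    · exact h
    · exact h
  loopless := by
    constructor
    rintro (u | e) h
    · exact G.loopless.irrefl u h.1
    · exact h

/-- The weight of a walk: the sum of the weights of its edges. -/
def walkWeight {V : Type} {W : Type} [AddCommMonoid W] {G : SimpleGraph V}
    (w : Sym2 V → W) {u v : V} (p : G.Walk u v) : W := (p.edges.map w).sum

/-!
Subdividing an edge `e ∉ F` replaces it by two edges of weight `w e / 2` through the new vertex
`inr e`, so a walk `p` of `G` lifts to a walk of `G'` of the same weight whose length is twice
the length of `p` minus the number of kept edges it uses. Conversely a path of `G'` between
original vertices cannot turn back at a subdivision vertex, so it is the lift of a path of `G`.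
For `F = {b}` a path uses `b` at most once, hence its lift has odd length iff it contains `b`,
so lifting maps the `s`-`t` paths of `G` through `b` onto the odd `s`-`t` paths of `G'`, preserving
weight.
-/

namespace SimpleGraph

open Sum

section Adj

variable {V : Type} {G : SimpleGraph V} {F : Set (Sym2 V)} {u v : V} {e f : Sym2 V}

@[simp] theorem subdivideOutside_adj_inl_inl :
    (subdivideOutside G F).Adj (inl u) (inl v) ↔ G.Adj u v ∧ s(u, v) ∈ F := Iff.rfl

@[simp] theorem subdivideOutside_adj_inl_inr :
    (subdivideOutside G F).Adj (inl u) (inr e) ↔ e ∈ G.edgeSet ∧ e ∉ F ∧ u ∈ e :=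
  Iff.rfl

@[simp] theorem subdivideOutside_adj_inr_inl :
    (subdivideOutside G F).Adj (inr e) (inl u) ↔ e ∈ G.edgeSet ∧ e ∉ F ∧ u ∈ e :=
  Iff.rfl

@[simp] theorem not_subdivideOutside_adj_inr_inr : ¬(subdivideOutside G F).Adj (inr e) (inr f) :=
  id

end Adj

namespace Walk

variable {V : Type} {G : SimpleGraph V} (F : Set (Sym2 V)) [DecidablePred (· ∈ F)]

def subdivide : ∀ {u v : V}, G.Walk u v → (subdivideOutside G F).Walk (inl u) (inl v)
  | _, _, nil => nil
  | u, _, cons (v := x) h p =>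
    if hF : s(u, x) ∈ F then cons (subdivideOutside_adj_inl_inl.2 ⟨h, hF⟩) (subdivide p)
    else cons (subdivideOutside_adj_inl_inr.2 ⟨h, hF, Sym2.mem_mk_left u x⟩)
      (cons (subdivideOutside_adj_inr_inl.2 ⟨h, hF, Sym2.mem_mk_right u x⟩) (subdivide p))

variable {F}

theorem subdivide_cons_of_mem {u x v : V} (h : G.Adj u x) (p : G.Walk x v)
    (hF : s(u, x) ∈ F) :
    (cons h p).subdivide F =
      cons (subdivideOutside_adj_inl_inl.2 ⟨h, hF⟩) (p.subdivide F) := by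
  simp [subdivide, hF]

theorem subdivide_cons_of_notMem {u x v : V} (h : G.Adj u x) (p : G.Walk x v)
    (hF : s(u, x) ∉ F) :
    (cons h p).subdivide F =
      cons (subdivideOutside_adj_inl_inr.2 ⟨h, hF, Sym2.mem_mk_left u x⟩)
        (cons (subdivideOutside_adj_inr_inl.2 ⟨h, hF, Sym2.mem_mk_right u x⟩)
          (p.subdivide F)) := by
  simp [subdivide, hF]

theorem length_subdivide_add_countP {u v : V} (p : G.Walk u v) :
    (p.subdivide F).length + p.edges.countP (· ∈ F) = 2 * p.length := by
  induction p with
  | nil => simp [subdivide]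
  | @cons u x v h p ih =>
    by_cases hF : s(u, x) ∈ F
    · simp only [subdivide_cons_of_mem h p hF, length_cons, edges_cons, hF, decide_true,
        List.countP_cons_of_pos]
      omega
    · simp only [subdivide_cons_of_notMem h p hF, length_cons, edges_cons, hF, decide_false,
        Bool.false_eq_true, not_false_eq_true, List.countP_cons_of_neg]
      omega

theorem inl_mem_support_subdivide_iff {u v y : V} (p : G.Walk u v) :
    inl y ∈ (p.subdivide F).support ↔ y ∈ p.support := by
  induction p with
  | nil => simp [subdivide]
  | @cons u x v h p ih =>
    by_cases hF : s(u, x) ∈ F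
    · simp [subdivide_cons_of_mem h p hF, ih]
    · simp [subdivide_cons_of_notMem h p hF, ih]

theorem mem_edges_of_inr_mem_support_subdivide {u v : V} {e : Sym2 V} (p : G.Walk u v)
    (he : inr e ∈ (p.subdivide F).support) : e ∈ p.edges := by
  induction p with
  | nil => simp [subdivide] at he
  | @cons u x v h p ih =>
    by_cases hF : s(u, x) ∈ F
    · simp only [subdivide_cons_of_mem h p hF, support_cons, List.mem_cons, reduceCtorEq,
        false_or] at he
      exact List.mem_cons_of_mem _ (ih he)
    · simp only [subdivide_cons_of_notMem h p hF, support_cons, List.mem_cons, reduceCtorEq,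
        false_or, inr.injEq] at he
      rw [edges_cons, List.mem_cons]
      exact he.imp id ih

theorem isPath_subdivide_iff {u v : V} (p : G.Walk u v) :
    (p.subdivide F).IsPath ↔ p.IsPath := by
  induction p with
  | nil => simp [subdivide]
  | @cons u x v h p ih =>
    by_cases hF : s(u, x) ∈ F
    · simp [subdivide_cons_of_mem h p hF, ih, inl_mem_support_subdivide_iff]
    · simp only [subdivide_cons_of_notMem h p hF, cons_isPath_iff, ih, support_cons,
        List.mem_cons, reduceCtorEq, false_or, inl_mem_support_subdivide_iff]
      refine ⟨fun h => ⟨h.1.1, h.2⟩, fun hp => ⟨⟨hp.1, fun he => hp.2 ?_⟩, hp.2⟩⟩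
      exact p.fst_mem_support_of_mem_edges (mem_edges_of_inr_mem_support_subdivide p he)

theorem map_inl_mem_edges_subdivide_iff {u v : V} {b : Sym2 V} (hb : b ∈ F) (p : G.Walk u v) :
    b.map inl ∈ (p.subdivide F).edges ↔ b ∈ p.edges := by
  induction p with
  | nil => simp [subdivide]
  | @cons u x v h p ih =>
    by_cases hF : s(u, x) ∈ F
    · simp [subdivide_cons_of_mem h p hF, ih, ← Sym2.map_mk,
        (Sym2.map.injective inl_injective).eq_iff]
    · have hne : s(u, x) ≠ b := fun h => hF (h ▸ hb)
      have hb_ne_mixed : ∀ y, b.map inl ≠ s(inl y, inr s(u, x)) := by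
        induction b using Sym2.ind
        simp
      simp [subdivide_cons_of_notMem h p hF, ih, hne.symm, hb_ne_mixed, Sym2.eq_swap (a := inr _)]

theorem walkWeight_subdivide {K : Type} [DivisionRing K] [NeZero (2 : K)]
    {w : Sym2 V → K} {w' : Sym2 (V ⊕ Sym2 V) → K}
    (hkeep : ∀ e ∈ F, w' (e.map inl) = w e)
    (hsplit : ∀ e ∈ G.edgeSet, e ∉ F → ∀ x ∈ e, w' s(inl x, inr e) = w e / 2)
    {u v : V} (p : G.Walk u v) : walkWeight w' (p.subdivide F) = walkWeight w p := by
  induction p with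
  | nil => simp [subdivide, walkWeight]
  | @cons u x v h p ih =>
    simp only [walkWeight] at ih ⊢
    by_cases hF : s(u, x) ∈ F
    · simp [subdivide_cons_of_mem h p hF, ih, ← hkeep _ hF]
    · simp only [subdivide_cons_of_notMem h p hF, edges_cons, List.map_cons, List.sum_cons, ih,
        Sym2.eq_swap (a := inr _), hsplit _ h hF u (Sym2.mem_mk_left u x),
        hsplit _ h hF x (Sym2.mem_mk_right u x)]
      rw [← add_assoc, add_halves]

theorem IsPath.exists_subdivide_eq {u v : V} {q : (subdivideOutside G F).Walk (inl u) (inl v)}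
    (hq : q.IsPath) : ∃ p : G.Walk u v, p.subdivide F = q := by
  induction hn : q.length using Nat.strong_induction_on generalizing u with
  | _ n ih =>
  cases q with
  | nil => exact ⟨Walk.nil, by simp [subdivide]⟩
  | @cons _ c _ h q =>
    rcases c with x | e
    · obtain ⟨p, rfl⟩ := ih _ (by simp [← hn]) hq.of_cons rfl
      exact ⟨cons h.1 p, subdivide_cons_of_mem h.1 p h.2⟩
    · cases q with
      | @cons _ c _ h' q =>
      rcases c with x | f
      · obtain ⟨p, rfl⟩ := ih _ (by simp [← hn]) hq.of_cons.of_cons rfl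
        have hux : u ≠ x := by
          rintro rfl
          simp at hq
        obtain rfl : e = s(u, x) := (Sym2.mem_and_mem_iff hux).1 ⟨h.2.2, h'.2.2⟩
        exact ⟨cons h.1 p, subdivide_cons_of_notMem h.1 p h.2.1⟩
      · exact (not_subdivideOutside_adj_inr_inr h').elim

theorem IsPath.odd_length_subdivide_singleton_iff {b : Sym2 V}
    [DecidablePred (· ∈ ({b} : Set (Sym2 V)))] {u v : V} {p : G.Walk u v} (hp : p.IsPath) :
    Odd (p.subdivide {b}).length ↔ b ∈ p.edges := by
  classical
  have hsum := length_subdivide_add_countP (F := {b}) p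
  have hcount : p.edges.countP (· ∈ ({b} : Set (Sym2 V))) = p.edges.count b := by
    rw [List.count_eq_countP]
    exact List.countP_congr (by simp)
  have hle : p.edges.count b ≤ 1 := List.nodup_iff_count_le_one.1 hp.isTrail.edges_nodup b
  rw [← List.count_pos_iff, Nat.odd_iff]
  omega

end Walk

end SimpleGraph

theorem stmt_4_general {V : Type} (G : SimpleGraph V) (s t : V) (bs bt : V)
    (w : Sym2 V → ℝ)
    (w' : Sym2 (V ⊕ Sym2 V) → ℝ)
    (hkeep : w' s(Sum.inl bs, Sum.inl bt) = w s(bs, bt))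
    (hsplit : ∀ e ∈ G.edgeSet, e ≠ s(bs, bt) → ∀ x : V, x ∈ e →
      w' s(Sum.inl x, Sum.inr e) = w e / 2) :
    (∀ q : (subdivideOutside G {s(bs, bt)}).Walk (Sum.inl s) (Sum.inl t),
      q.IsPath → (Odd q.length ↔ s(Sum.inl bs, Sum.inl bt) ∈ q.edges)) ∧
    sInf {x : ℝ | ∃ p : G.Walk s t, p.IsPath ∧ s(bs, bt) ∈ p.edges ∧
        walkWeight w p = x} =
      sInf {x : ℝ | ∃ q : (subdivideOutside G {s(bs, bt)}).Walk
          (Sum.inl s) (Sum.inl t),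
        q.IsPath ∧ Odd q.length ∧ walkWeight w' q = x} := by
  classical
  have hweight (p : G.Walk s t) :
      walkWeight w' (p.subdivide {s(bs, bt)}) = walkWeight w p :=
    p.walkWeight_subdivide (F := {s(bs, bt)}) (by rintro _ rfl; exact hkeep) hsplit
  refine ⟨fun q hq => ?_, congrArg sInf (Set.ext fun x => ⟨?_, ?_⟩)⟩
  · obtain ⟨p, rfl⟩ := hq.exists_subdivide_eq
    rw [(p.isPath_subdivide_iff.1 hq).odd_length_subdivide_singleton_iff]
    exact (p.map_inl_mem_edges_subdivide_iff (Set.mem_singleton _)).symm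
  · rintro ⟨p, hp, hbp, rfl⟩
    exact ⟨p.subdivide _, p.isPath_subdivide_iff.2 hp,
      hp.odd_length_subdivide_singleton_iff.2 hbp, hweight p⟩
  · rintro ⟨q, hq, hq_odd, rfl⟩
    obtain ⟨p, rfl⟩ := hq.exists_subdivide_eq
    have hp := p.isPath_subdivide_iff.1 hq
    exact ⟨p, hp, hp.odd_length_subdivide_singleton_iff.1 hq_odd, (hweight p).symm⟩

/-- Let `G'` be obtained from `G` by subdividing every edge
except `b`, each subdivision edge getting weight `w(e)/2` (expressed by the
hypotheses on the weight function `w'` of `G'`).  Then an `s`-`t`-path in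
`G'` (between original vertices of `G`) has odd length iff it contains the
edge `b`; consequently, the minimum weight of an `s`-`t`-path in `G`
containing `b` equals the minimum weight of an odd-length `s`-`t`-path in
`G'`. -/
theorem stmt_4 {V : Type} (G : SimpleGraph V) (s t : V) (bs bt : V)
    (hb : s(bs, bt) ∈ G.edgeSet)
    (w : Sym2 V → ℝ) (hw : ∀ e, 0 ≤ w e)
    (w' : Sym2 (V ⊕ Sym2 V) → ℝ)
    (hkeep : w' s(Sum.inl bs, Sum.inl bt) = w s(bs, bt))
    (hsplit : ∀ e ∈ G.edgeSet, e ≠ s(bs, bt) → ∀ x : V, x ∈ e →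
      w' s(Sum.inl x, Sum.inr e) = w e / 2) :
    (∀ q : (subdivideOutside G {s(bs, bt)}).Walk (Sum.inl s) (Sum.inl t),
      q.IsPath → (Odd q.length ↔ s(Sum.inl bs, Sum.inl bt) ∈ q.edges)) ∧
    sInf {x : ℝ | ∃ p : G.Walk s t, p.IsPath ∧ s(bs, bt) ∈ p.edges ∧
        walkWeight w p = x} =
      sInf {x : ℝ | ∃ q : (subdivideOutside G {s(bs, bt)}).Walk
          (Sum.inl s) (Sum.inl t),
        q.IsPath ∧ Odd q.length ∧ walkWeight w' q = x} :=
  stmt_4_general G s t bs bt w w' hkeep hsplit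
end

section
/- Let G be a graph and M = {(v, v') : v ∈ V(G)} a perfect matching between G and a disjoint mirror copy of G. Construct G' as two disjoint copies of G plus all matching edges vv', then delete s' and t. Then G has an even-length s-t-path if and only if G' has an M-alternating s-t'-path, i.e., a path from s to t' whose edges alternately lie outside and inside M, starting and ending with non-matching edges. -/
/-!
`G'` is the prism `G □ K₂` on `V ⊕ V` with `s'` and `t` isolated. A path `s = v₀, v₁, …, vₙ = t`
of `G` lifts to the prism path that runs along `vᵢvᵢ₊₁` in layer `i mod 2` and crosses the
matching edge `vᵢvᵢ'` at every interior vertex. The lift is `M`-alternating, ends at `t'` exactly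
when `n` is even, and avoids `s'` and `t` because `s` and `t` occur only as endpoints.
Conversely, contracting the matching edges of an alternating path from `s` to `t'` leaves a walk
of `G` whose length is one more than the number of matching edges, which is odd because the layer
changes from `s` to `t'`. That walk is a path: every interior vertex of an alternating path is
covered by its matching edge, so a repeated vertex of `G` would mean a repeated vertex of the
prism or a visit to `t`, the mirror of the endpoint `t'`, which is deleted.
-/

/-- Derigs' auxiliary graph `G'`: two disjoint copies of `G` (`Sum.inl` is
the original, `Sum.inr` the mirror copy), plus all matching edges `v v'`,
with the vertices `s' = Sum.inr s` and `t = Sum.inl t` deleted (made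
isolated). -/
def mirrorGraph {V : Type} (G : SimpleGraph V) (s t : V) :
    SimpleGraph (V ⊕ V) where
  Adj x y :=
    x ≠ Sum.inr s ∧ x ≠ Sum.inl t ∧ y ≠ Sum.inr s ∧ y ≠ Sum.inl t ∧
      (match x, y with
       | .inl u, .inl v => G.Adj u v
       | .inr u, .inr v => G.Adj u v
       | .inl u, .inr v => u = v
       | .inr u, .inl v => u = v)
  symm := by
    refine ⟨?_⟩
    rintro (u | u) (v | v) ⟨h1, h2, h3, h4, h5⟩
    · exact ⟨h3, h4, h1, h2, h5.symm⟩
    · exact ⟨h3, h4, h1, h2, h5.symm⟩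
    · exact ⟨h3, h4, h1, h2, h5.symm⟩
    · exact ⟨h3, h4, h1, h2, h5.symm⟩
  loopless := by
    refine ⟨?_⟩
    rintro (u | u) ⟨_, _, _, _, h⟩ <;> exact G.irrefl h

/-- The perfect matching `M = {vv' : v ∈ V(G)}` between the two copies. -/
def mirrorMatching (V : Type) : Set (Sym2 (V ⊕ V)) :=
  {e | ∃ v : V, e = s(Sum.inl v, Sum.inr v)}

open SimpleGraph Sum

namespace List

variable {α : Type*} (M : Set α)

def IsAlternating : List α → Prop
  | [] => True
  | [e] => e ∉ M
  | e :: f :: l => e ∉ M ∧ f ∈ M ∧ IsAlternating l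

variable {M}

theorem isAlternating_iff_get :
    ∀ {l : List α}, l.IsAlternating M ↔ ∀ (i : ℕ) (hi : i < l.length), (l.get ⟨i, hi⟩ ∈ M ↔ Odd i)
  | [] => by simp [IsAlternating]
  | [e] => by simp [IsAlternating]
  | e :: f :: l => by
    rw [IsAlternating, isAlternating_iff_get]
    constructor
    · rintro ⟨he, hf, hl⟩ (_ | _ | i) hi
      · simpa using he
      · simpa using hf
      · simpa [Nat.odd_add] using hl i (by simpa using hi)
    · intro h
      exact ⟨by simpa using h 0 (by simp), by simpa using h 1 (by simp),
        fun i hi => by simpa [Nat.odd_add] using h (i + 2) (by simpa using hi)⟩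

end List

namespace SimpleGraph

theorem Walk.notMem_support_of_forall_not_adj {W : Type*} {K : SimpleGraph W} {u v z : W}
    (q : K.Walk u v) (hz : ∀ w, ¬K.Adj z w) (hzv : z ≠ v) : z ∉ q.support := by
  rw [Walk.mem_support_iff_exists_mem_edges]
  rintro (rfl | ⟨e, he, hze⟩)
  · exact hzv rfl
  · obtain ⟨w, rfl⟩ := Sym2.mem_iff_exists.mp hze
    exact hz w (q.adj_of_mem_edges he)

variable {V : Type}

def prism (G : SimpleGraph V) : SimpleGraph (V ⊕ V) where
  Adj x y := match x, y with
    | .inl u, .inl v => G.Adj u v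
    | .inr u, .inr v => G.Adj u v
    | .inl u, .inr v => u = v
    | .inr u, .inl v => u = v
  symm := ⟨by rintro (u | u) (v | v) h <;> exact h.symm⟩
  loopless := ⟨by rintro (u | u) h <;> exact G.irrefl h⟩

variable {G : SimpleGraph V}

theorem mirrorGraph_adj {s t : V} {x y : V ⊕ V} : (mirrorGraph G s t).Adj x y ↔
    G.prism.Adj x y ∧ x ≠ inr s ∧ x ≠ inl t ∧ y ≠ inr s ∧ y ≠ inl t := by
  simp only [mirrorGraph]; tauto

theorem mirrorGraph_le (G : SimpleGraph V) (s t : V) : mirrorGraph G s t ≤ G.prism :=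
  fun _ _ h => h.2.2.2.2

namespace prism

def proj : V ⊕ V → V := Sum.elim id id

variable {x y : V ⊕ V}

@[simp] theorem proj_inl (v : V) : proj (inl v) = v := rfl

@[simp] theorem proj_inr (v : V) : proj (inr v) = v := rfl

@[simp] theorem proj_swap (x : V ⊕ V) : proj x.swap = proj x := by cases x <;> rfl

theorem proj_eq_proj_iff : proj x = proj y ↔ x = y ∨ x = y.swap := by
  cases x <;> cases y <;> simp

theorem adj_iff_of_isLeft_eq (h : x.isLeft = y.isLeft) :
    G.prism.Adj x y ↔ G.Adj (proj x) (proj y) := by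
  cases x <;> cases y <;> first | rfl | simp at h

theorem adj_swap (x : V ⊕ V) : G.prism.Adj x x.swap := by cases x <;> rfl

theorem mk_mem_mirrorMatching_iff : s(x, y) ∈ mirrorMatching V ↔ y = x.swap := by
  cases x <;> cases y <;> simp [mirrorMatching, eq_comm]

theorem mk_notMem_mirrorMatching_of_isLeft_eq (h : x.isLeft = y.isLeft) :
    s(x, y) ∉ mirrorMatching V := by
  rw [mk_mem_mirrorMatching_iff]; rintro rfl; cases x <;> simp at h

theorem isLeft_eq_of_adj (h : G.prism.Adj x y) (hM : s(x, y) ∉ mirrorMatching V) :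
    x.isLeft = y.isLeft := by
  cases x <;> cases y <;> simp_all [prism, mk_mem_mirrorMatching_iff]

theorem exists_isAlternating_lift {a b : V} (p : G.Walk a b) (hp : p.IsPath) (hnil : ¬p.Nil)
    {x y : V ⊕ V} (hx : proj x = a) (hy : proj y = b) (hxy : Even p.length ↔ x.isLeft ≠ y.isLeft) :
    ∃ q : G.prism.Walk x y, q.IsPath ∧ Odd q.length ∧ q.edges.IsAlternating (mirrorMatching V) ∧
      ∀ z ∈ q.support, proj z ∈ p.support ∧ (proj z = a → z = x) ∧ (proj z = b → z = y) := by
  induction p generalizing x with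
  | nil => exact absurd .nil hnil
  | @cons a u b h p ih =>
    have hab : a ≠ b := (hp.nil_iff_eq.not).mp hnil
    obtain ⟨hp, ha⟩ := (Walk.cons_isPath_iff h p).mp hp
    cases p with
    | nil =>
      have hside : x.isLeft = y.isLeft := by simpa using hxy
      have hne : x ≠ y := fun e => h.ne (by rw [← hx, ← hy, e])
      refine ⟨.cons ((adj_iff_of_isLeft_eq hside).mpr (hx ▸ hy ▸ h)) .nil, by simpa using hne,
        by simp, mk_notMem_mirrorMatching_of_isLeft_eq hside, ?_⟩
      simp +contextual [hx, hy, hab, hab.symm]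
    | cons h' p =>
      obtain ⟨w, hwu, hwx⟩ : ∃ w, proj w = u ∧ w.isLeft = x.isLeft :=
        ⟨x.map (fun _ => u) (fun _ => u), by cases x <;> rfl, Sum.isLeft_map _ _ _⟩
      have hub : u ≠ b := (hp.nil_iff_eq.not).mp Walk.not_nil_cons
      have hx_ne : ∀ z, proj z = u → x ≠ z := fun z hz e => h.ne (by rw [← hx, e, hz])
      obtain ⟨q, hq, hodd, halt, hsupp⟩ := ih hp Walk.not_nil_cons (x := w.swap)
        (by simpa using hwu) hy (by
          rw [Walk.length_cons, Nat.even_add_one] at hxy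
          cases x <;> cases y <;> cases w <;> simp_all)
      have hwq : w ∉ q.support := fun hw => by
        have := (hsupp w hw).2.1 hwu
        cases w <;> simp at this
      have hxq : x ∉ q.support := fun hxq => ha (hx ▸ (hsupp x hxq).1)
      refine ⟨.cons ((adj_iff_of_isLeft_eq hwx.symm).mpr (hx ▸ hwu ▸ h)) (.cons (adj_swap w) q),
        ?_, ?_, ?_, ?_⟩
      · simp [Walk.cons_isPath_iff, hq, hwq, hxq, hx_ne w hwu]
      · exact hodd.add_even even_two
      · rw [Walk.edges_cons, Walk.edges_cons]
        exact ⟨mk_notMem_mirrorMatching_of_isLeft_eq hwx.symm, mk_mem_mirrorMatching_iff.mpr rfl,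
          halt⟩
      · intro z hz
        simp only [Walk.support_cons, List.mem_cons] at hz
        rcases hz with rfl | rfl | hz
        · exact ⟨by simp [hx], fun _ => rfl, fun e => absurd (hx ▸ e) hab⟩
        · exact ⟨by simp [hwu], fun e => absurd (hwu ▸ e).symm h.ne, fun e => absurd (hwu ▸ e) hub⟩
        · obtain ⟨hm, -, hzb⟩ := hsupp z hz
          exact ⟨List.mem_cons_of_mem _ hm, fun e => absurd (e ▸ hm) ha, hzb⟩

theorem exists_isPath_of_isAlternating : ∀ {x y : V ⊕ V} (q : G.prism.Walk x y), q.IsPath →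
    Odd q.length → q.edges.IsAlternating (mirrorMatching V) → y.swap ∉ q.support →
    ∃ p : G.Walk (proj x) (proj y), p.IsPath ∧ (Even p.length ↔ x.isLeft ≠ y.isLeft) ∧
      ∀ z, proj z ∈ p.support → (proj z = proj x → z = x) → (proj z = proj y → z = y) →
        z ∈ q.support
  | _, _, .nil, _, hodd, _, _ => absurd hodd (by simp)
  | _, _, .cons _ (.cons _ .nil), _, hodd, _, _ => absurd hodd (by simp)
  | x, y, .cons h .nil, _, _, halt, _ => by
    have hside := isLeft_eq_of_adj h halt
    have hG := (adj_iff_of_isLeft_eq hside).mp h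
    refine ⟨.cons hG .nil, by simp [hG.ne], by simp [hside], fun z hz hzx hzy => ?_⟩
    simp only [Walk.support_cons, Walk.support_nil, List.mem_cons, List.not_mem_nil, or_false] at hz
    rcases hz with hz | hz <;> simp [hzx, hzy, hz]
  | x, y, .cons (v := w) h₁ (.cons (v := v) h₂ q), hq, hodd, halt, hy => by
    rw [Walk.edges_cons, Walk.edges_cons] at halt
    obtain ⟨hM₁, hM₂, halt⟩ := halt
    have hv := mk_mem_mirrorMatching_iff.mp hM₂
    have hvw : proj v = proj w := by rw [hv, proj_swap]
    have hside := isLeft_eq_of_adj h₁ hM₁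
    have hG := (adj_iff_of_isLeft_eq hside).mp h₁
    obtain ⟨hq, hxq⟩ := (Walk.cons_isPath_iff _ _).mp hq
    replace hxq : x ∉ q.support := fun h => hxq (by simp [h])
    obtain ⟨p, hp, hpar, hsupp⟩ := exists_isPath_of_isAlternating q hq.of_cons
      (by simpa [Nat.odd_add] using hodd) halt (fun h => hy (by simp [h]))
    have hxp : proj x ∉ p.support := fun hm => hxq <| hsupp x hm
      (fun e => (hG.ne (e.trans hvw)).elim) (fun e => by
        rcases proj_eq_proj_iff.mp e with rfl | rfl
        · rfl
        · exact absurd (Walk.start_mem_support _) hy)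
    refine ⟨.cons hG (p.copy hvw rfl), by simp [Walk.cons_isPath_iff, hp, hxp], ?_, ?_⟩
    · rw [Walk.length_cons, Walk.length_copy, Nat.even_add_one, hpar, hv, hside]
      cases w <;> cases y <;> simp
    · intro z hz hzx hzy
      simp only [Walk.support_cons, Walk.support_copy, List.mem_cons] at hz
      rcases hz with hz | hz
      · simp [hzx hz]
      · by_cases hzw : proj z = proj w
        · rcases proj_eq_proj_iff.mp hzw with rfl | rfl
          · simp
          · simp [← hv]
        · simp [hsupp z hz (fun e => absurd (e.trans hvw) hzw) hzy]

end prism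

theorem edges_subset_edgeSet_mirrorGraph {s t : V} {x y : V ⊕ V} {q : G.prism.Walk x y}
    (hq : ∀ z ∈ q.support, z ≠ inr s ∧ z ≠ inl t) :
    ∀ e ∈ q.edges, e ∈ (mirrorGraph G s t).edgeSet := by
  intro e he
  induction e using Sym2.ind with
  | h a b =>
    obtain ⟨has, hat⟩ := hq a (q.fst_mem_support_of_mem_edges he)
    obtain ⟨hbs, hbt⟩ := hq b (q.snd_mem_support_of_mem_edges he)
    exact mirrorGraph_adj.mpr ⟨q.adj_of_mem_edges he, has, hat, hbs, hbt⟩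

end SimpleGraph

/-- `G` has an even-length `s`-`t`-path iff `G'` has an
`M`-alternating `s`-`t'`-path, i.e. a path from `s` to `t'` of odd length
whose edges at odd (0-based) positions are exactly the matching edges, so
that it starts and ends with non-matching edges. -/
theorem stmt_10 {V : Type} (G : SimpleGraph V) (s t : V) (hst : s ≠ t) :
    (∃ p : G.Walk s t, p.IsPath ∧ Even p.length) ↔
      (∃ q : (mirrorGraph G s t).Walk (Sum.inl s) (Sum.inr t),
        q.IsPath ∧ Odd q.length ∧
          ∀ (i : ℕ) (hi : i < q.edges.length),
            (q.edges.get ⟨i, hi⟩ ∈ mirrorMatching V ↔ Odd i)) := by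
  simp_rw [← List.isAlternating_iff_get]
  constructor
  · rintro ⟨p, hp, hev⟩
    obtain ⟨q, hq, hodd, halt, hsupp⟩ := prism.exists_isAlternating_lift p hp
      (hp.nil_iff_eq.not.mpr hst) (x := inl s) (y := inr t) rfl rfl (by simpa using hev)
    have hq_avoid : ∀ z ∈ q.support, z ≠ inr s ∧ z ≠ inl t := fun z hz =>
      ⟨by rintro rfl; simpa using (hsupp _ hz).2.1 rfl,
        by rintro rfl; simpa using (hsupp _ hz).2.2 rfl⟩
    have hedges := edges_subset_edgeSet_mirrorGraph hq_avoid
    exact ⟨q.transfer _ hedges, hq.transfer hedges, by simpa using hodd, by simpa using halt⟩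
  · rintro ⟨q, hq, hodd, halt⟩
    have ht : inl t ∉ q.support := q.notMem_support_of_forall_not_adj
      (fun _ h => (mirrorGraph_adj.mp h).2.2.1 rfl) (by simp)
    obtain ⟨p, hp, hpar, -⟩ := prism.exists_isPath_of_isAlternating
      (q.mapLe (mirrorGraph_le G s t)) (hq.mapLe _) (by simpa using hodd)
      (by simpa [Walk.edges_mapLe_eq_edges] using halt)
      (by simpa [Walk.support_mapLe_eq_support] using ht)
    exact ⟨p, hp, by simpa using hpar⟩
end
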